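/- arXiv:2208.05238 — 6 statements merged into one kernel-verified Lean document; each statement's English description precedes it below -/
import Mathlib

section
/- Let V, W be finite-dimensional real inner product spaces, P : V → V a linear projection, curl : V → W linear, ω ∈ ℝ, α ≠ 0, and J ∈ V. Suppose u ∈ V satisfies −ω²⟨Pv, Pu⟩ + ⟨curl(Pv), curl(Pu)⟩ + α⟨(I−P)v, (I−P)u⟩ = ⟨Pv, J⟩ for all v ∈ V. Then u = Pu ∈ range P, and u satisfies the conforming problem −ω²⟨vᶜ, u⟩ + ⟨curl vᶜ, curl u⟩ = ⟨vᶜ, J⟩ for all vᶜ ∈ range P. -/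
/-! Testing the stabilized problem with `v = u - P u`, which `P` annihilates, leaves only the
stabilization term `α ‖u - P u‖² = 0`, so `u = P u`. Once the jump term vanishes, testing with
any `v` recovers the conforming equation for `vc = P v`. -/

open scoped RealInnerProductSpace

lemma LinearMap.apply_sub_apply_self_eq_zero {R M : Type*} [Ring R] [AddCommGroup M] [Module R M]
    {P : M →ₗ[R] M} (hP : P ∘ₗ P = P) (x : M) : P (x - P x) = 0 := by
  rw [map_sub, ← LinearMap.comp_apply, hP, sub_self]

section StabilizedProblem

variable {V W : Type*} [NormedAddCommGroup V] [InnerProductSpace ℝ V]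
  [NormedAddCommGroup W] [InnerProductSpace ℝ W]
  {P : V →ₗ[ℝ] V} {curl : V →ₗ[ℝ] W} {ω α : ℝ} {J u : V}

theorem apply_eq_self_of_stabilized (hP : P ∘ₗ P = P) (hα : α ≠ 0)
    (hvar : ∀ v : V, -ω ^ 2 * ⟪P v, P u⟫ + ⟪curl (P v), curl (P u)⟫
      + α * ⟪v - P v, u - P u⟫ = ⟪P v, J⟫) :
    P u = u := by
  have hjump : α * ⟪u - P u, u - P u⟫ = 0 := by
    simpa [LinearMap.apply_sub_apply_self_eq_zero hP u] using hvar (u - P u)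
  have hnorm : ⟪u - P u, u - P u⟫ = 0 := (mul_eq_zero.mp hjump).resolve_left hα
  exact (sub_eq_zero.mp (inner_self_eq_zero.mp hnorm)).symm

theorem conforming_of_stabilized (hPu : P u = u)
    (hvar : ∀ v : V, -ω ^ 2 * ⟪P v, P u⟫ + ⟪curl (P v), curl (P u)⟫
      + α * ⟪v - P v, u - P u⟫ = ⟪P v, J⟫) :
    ∀ vc ∈ LinearMap.range P, -ω ^ 2 * ⟪vc, u⟫ + ⟪curl vc, curl u⟫ = ⟪vc, J⟫ := by
  rintro _ ⟨v, rfl⟩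
  simpa [hPu] using hvar v

end StabilizedProblem

theorem stmt4_general
    {V W : Type*}
    [NormedAddCommGroup V] [InnerProductSpace ℝ V]
    [NormedAddCommGroup W] [InnerProductSpace ℝ W]
    (P : V →ₗ[ℝ] V) (hP : P ∘ₗ P = P)
    (curl : V →ₗ[ℝ] W)
    (ω α : ℝ) (hα : α ≠ 0)
    (J u : V)
    (hvar : ∀ v : V,
      -ω ^ 2 * ⟪P v, P u⟫ + ⟪curl (P v), curl (P u)⟫
        + α * ⟪v - P v, u - P u⟫ = ⟪P v, J⟫) :
    P u = u ∧
    ∀ vc ∈ LinearMap.range P,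
      -ω ^ 2 * ⟪vc, u⟫ + ⟪curl vc, curl u⟫ = ⟪vc, J⟫ :=
  have hPu := apply_eq_self_of_stabilized hP hα hvar
  ⟨hPu, conforming_of_stabilized hPu hvar⟩

/-- Proposition 3.2: the stabilized broken-FEEC time-harmonic
Maxwell solution is conforming and solves the conforming problem. -/
theorem stmt4
    {V W : Type*}
    [NormedAddCommGroup V] [InnerProductSpace ℝ V] [FiniteDimensional ℝ V]
    [NormedAddCommGroup W] [InnerProductSpace ℝ W] [FiniteDimensional ℝ W]
    (P : V →ₗ[ℝ] V) (hP : P ∘ₗ P = P)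
    (curl : V →ₗ[ℝ] W)
    (ω α : ℝ) (hα : α ≠ 0)
    (J u : V)
    (hvar : ∀ v : V,
      -ω ^ 2 * ⟪P v, P u⟫ + ⟪curl (P v), curl (P u)⟫
        + α * ⟪v - P v, u - P u⟫ = ⟪P v, J⟫) :
    P u = u ∧
    ∀ vc ∈ LinearMap.range P,
      -ω ^ 2 * ⟪vc, u⟫ + ⟪curl vc, curl u⟫ = ⟪vc, J⟫ :=
  stmt4_general P hP curl ω α hα J u hvar
end

section
/- Let V, W be finite-dimensional real inner product spaces, P : V → V a linear projection, curl : V → W linear. Suppose (λ, u) with λ ≠ 0 and u ≠ 0 satisfies the generalized eigenproblem ⟨curl(Pv), curl(Pu)⟩ = λ(⟨Pv, Pu⟩ + ⟨(I−P)v, (I−P)u⟩) for all v ∈ V. Then u ∈ range P and ⟨curl v, curl u⟩ = λ⟨v, u⟩ for all v ∈ range P. Conversely, any u ∈ range P satisfying the latter also satisfies the former for all v ∈ V. -/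
open scoped RealInnerProductSpace

/-!
Testing the CONGA eigenproblem with `v = u - P u`, which `P` annihilates, leaves
`λ ‖u - P u‖² = 0`; as `λ ≠ 0` this forces `P u = u`, i.e. `u ∈ range P`. Once `P u = u` the
non-conforming penalty term `⟪v - P v, u - P u⟫` vanishes and both eigenproblems read
`⟪curl (P v), curl u⟫ = λ ⟪P v, u⟫` for all `v`.
-/

section

variable {V W : Type*} [NormedAddCommGroup V] [InnerProductSpace ℝ V]
  [NormedAddCommGroup W] [InnerProductSpace ℝ W]
  {P : V →ₗ[ℝ] V} {lam : ℝ} {u : V}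

namespace LinearMap.IsIdempotentElem

theorem apply_sub_self_eq_zero (hP : IsIdempotentElem P) (x : V) : P (x - P x) = 0 := by
  rw [map_sub, ← Module.End.mul_apply, hP.eq, sub_self]

theorem apply_eq_self_of_forall_inner_curl (hP : IsIdempotentElem P) (curl : V →ₗ[ℝ] W)
    (hlam : lam ≠ 0)
    (h : ∀ v : V, ⟪curl (P v), curl (P u)⟫ = lam * (⟪P v, P u⟫ + ⟪v - P v, u - P u⟫)) :
    P u = u := by
  have hnorm : lam * ⟪u - P u, u - P u⟫ = 0 := by
    have := h (u - P u)
    rwa [apply_sub_self_eq_zero hP, map_zero, inner_zero_left, inner_zero_left, zero_add,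
      sub_zero, eq_comm] at this
  have hzero : u - P u = 0 :=
    inner_self_eq_zero.mp ((mul_eq_zero.mp hnorm).resolve_left hlam)
  exact (sub_eq_zero.mp hzero).symm

end LinearMap.IsIdempotentElem

theorem forall_inner_curl_iff_of_apply_eq_self (curl : V →ₗ[ℝ] W) (hPu : P u = u) :
    (∀ v : V, ⟪curl (P v), curl (P u)⟫ = lam * (⟪P v, P u⟫ + ⟪v - P v, u - P u⟫)) ↔
      ∀ v ∈ LinearMap.range P, ⟪curl v, curl u⟫ = lam * ⟪v, u⟫ := by
  simp only [hPu, sub_self, inner_zero_right, add_zero, LinearMap.mem_range,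
    forall_exists_index, forall_apply_eq_imp_iff]

end

theorem stmt5_general
    {V W : Type*}
    [NormedAddCommGroup V] [InnerProductSpace ℝ V]
    [NormedAddCommGroup W] [InnerProductSpace ℝ W]
    (P : V →ₗ[ℝ] V) (hP : P ∘ₗ P = P)
    (curl : V →ₗ[ℝ] W)
    (lam : ℝ) (hlam : lam ≠ 0)
    (u : V) :
    (∀ v : V,
        ⟪curl (P v), curl (P u)⟫
          = lam * (⟪P v, P u⟫ + ⟪v - P v, u - P u⟫)) ↔
    (u ∈ LinearMap.range P ∧
      ∀ v ∈ LinearMap.range P, ⟪curl v, curl u⟫ = lam * ⟪v, u⟫) := by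
  have hmem : u ∈ LinearMap.range P ↔ P u = u := LinearMap.IsIdempotentElem.mem_range_iff hP
  constructor
  · intro h
    have hPu := LinearMap.IsIdempotentElem.apply_eq_self_of_forall_inner_curl hP curl hlam h
    exact ⟨hmem.mpr hPu, (forall_inner_curl_iff_of_apply_eq_self curl hPu).mp h⟩
  · rintro ⟨hu, h⟩
    exact (forall_inner_curl_iff_of_apply_eq_self curl (hmem.mp hu)).mpr h

/-- Proposition 3.3: for `λ ≠ 0` and `u ≠ 0`, the CONGA
generalized curl-curl eigenproblem is equivalent to the conforming
eigenproblem on `range P`. -/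
theorem stmt5
    {V W : Type*}
    [NormedAddCommGroup V] [InnerProductSpace ℝ V] [FiniteDimensional ℝ V]
    [NormedAddCommGroup W] [InnerProductSpace ℝ W] [FiniteDimensional ℝ W]
    (P : V →ₗ[ℝ] V) (hP : P ∘ₗ P = P)
    (curl : V →ₗ[ℝ] W)
    (lam : ℝ) (hlam : lam ≠ 0)
    (u : V) (hu : u ≠ 0) :
    (∀ v : V,
        ⟪curl (P v), curl (P u)⟫
          = lam * (⟪P v, P u⟫ + ⟪v - P v, u - P u⟫)) ↔
    (u ∈ LinearMap.range P ∧
      ∀ v ∈ LinearMap.range P, ⟪curl v, curl u⟫ = lam * ⟪v, u⟫) :=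
  stmt5_general P hP curl lam hlam u
end

section
/- Let V, W be finite-dimensional real inner product spaces, P : V → V a linear projection, d : V → W linear, and set d_h := d ∘ P. Let d̃_h := d_h* : W → V be the Hilbert-space adjoint (so ⟨d̃_h w, v⟩ = ⟨w, d(Pv)⟩). Then for any α > 0, the kernel of the stabilized operator L := d̃_h ∘ d_h + α (I−P)* (I−P) equals { v ∈ range P : d v = 0 }, i.e. it coincides with the kernel of the conforming operator restricted to the conforming subspace. -/
/-!
With `L = (d P)†(d P) + α (I - P)†(I - P)` one has `⟪L v, v⟫ = ‖d (P v)‖² + α ‖v - P v‖²`, so for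
`α > 0` the kernel of `L` is `ker (d P) ∩ ker (I - P)`. For a projection `ker (I - P) = range P`,
and on `range P` the map `d P` agrees with `d`.
-/

open scoped RealInnerProductSpace

namespace LinearMap

variable {V E F : Type*}
  [NormedAddCommGroup V] [InnerProductSpace ℝ V] [FiniteDimensional ℝ V]
  [NormedAddCommGroup E] [InnerProductSpace ℝ E] [FiniteDimensional ℝ E]
  [NormedAddCommGroup F] [InnerProductSpace ℝ F] [FiniteDimensional ℝ F]

theorem inner_adjoint_comp_self_apply_self (A : V →ₗ[ℝ] E) (v : V) :
    ⟪(A.adjoint ∘ₗ A) v, v⟫ = ‖A v‖ ^ 2 := by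
  rw [comp_apply, adjoint_inner_left, real_inner_self_eq_norm_sq]

theorem ker_adjoint_comp_self_add_smul (A : V →ₗ[ℝ] E) (B : V →ₗ[ℝ] F) {α : ℝ} (hα : 0 < α) :
    ker (A.adjoint ∘ₗ A + α • (B.adjoint ∘ₗ B)) = ker A ⊓ ker B := by
  refine le_antisymm (fun v hv => ?_) (fun v ⟨hA, hB⟩ => ?_)
  · have hquad : ‖A v‖ ^ 2 + α * ‖B v‖ ^ 2 = 0 := by
      rw [← inner_adjoint_comp_self_apply_self, ← inner_adjoint_comp_self_apply_self,
        ← real_inner_smul_left, ← inner_add_left, ← smul_apply, ← add_apply, mem_ker.mp hv,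
        inner_zero_left]
    obtain ⟨hAv, hBv⟩ := (add_eq_zero_iff_of_nonneg (by positivity) (by positivity)).mp hquad
    exact ⟨by simpa using hAv, by simpa [hα.ne'] using hBv⟩
  · simp [mem_ker.mp hA, mem_ker.mp hB]

theorem IsIdempotentElem.ker_comp_inf_ker_id_sub {R M N : Type*} [Ring R]
    [AddCommGroup M] [Module R M] [AddCommGroup N] [Module R N]
    {P : M →ₗ[R] M} (hP : IsIdempotentElem P) (d : M →ₗ[R] N) :
    ker (d ∘ₗ P) ⊓ ker (id - P) = range P ⊓ ker d := by
  rw [← IsIdempotentElem.range_eq_ker hP, inf_comm]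
  ext v
  simp only [Submodule.mem_inf, mem_ker, comp_apply, and_congr_right_iff]
  intro hv
  rw [(mem_range_iff hP).mp hv]

end LinearMap

/-- for `α > 0` the kernel of the stabilized discrete
Hodge-Laplace operator `L = d_h* d_h + α (I−P)*(I−P)` (with `d_h = d ∘ P`)
equals the conforming kernel `{v ∈ range P : d v = 0}`. -/
theorem stmt7
    {V W : Type*}
    [NormedAddCommGroup V] [InnerProductSpace ℝ V] [FiniteDimensional ℝ V]
    [NormedAddCommGroup W] [InnerProductSpace ℝ W] [FiniteDimensional ℝ W]
    (P : V →ₗ[ℝ] V) (hP : P ∘ₗ P = P)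
    (d : V →ₗ[ℝ] W)
    (α : ℝ) (hα : 0 < α) :
    LinearMap.ker
        (LinearMap.adjoint (d ∘ₗ P) ∘ₗ (d ∘ₗ P)
          + α • (LinearMap.adjoint (LinearMap.id - P) ∘ₗ (LinearMap.id - P)))
      = LinearMap.range P ⊓ LinearMap.ker d := by
  rw [LinearMap.ker_adjoint_comp_self_add_smul _ _ hα]
  exact LinearMap.IsIdempotentElem.ker_comp_inf_ker_id_sub hP d
end

section
/- Let E⁰ ∈ V and B^{1/2} ∈ W be elements of finite-dimensional real inner product spaces, C : V → W linear with adjoint C* : W → V, and Δt > 0. Define the leap-frog iteration Eⁿ⁺¹ = Eⁿ + Δt · C* Bⁿ⁺¹ᐟ², Bⁿ⁺³ᐟ² = Bⁿ⁺¹ᐟ² − Δt · C Eⁿ⁺¹. Then the discrete pseudo-energy H*ₙ := ½(‖Eⁿ‖² + ‖Bⁿ⁺¹ᐟ²‖²) + (Δt/2)⟨C Eⁿ, Bⁿ⁺¹ᐟ²⟩ is constant in n: H*ₙ₊₁ = H*ₙ for all n ≥ 0. -/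
/-!
Both half-steps of the scheme are differences of squares:
`‖Eⁿ⁺¹‖² - ‖Eⁿ‖² = Δt ⟨Bⁿ⁺¹ᐟ², C (Eⁿ + Eⁿ⁺¹)⟩` and `‖Bⁿ⁺³ᐟ²‖² - ‖Bⁿ⁺¹ᐟ²‖² = -Δt ⟨C Eⁿ⁺¹, Bⁿ⁺¹ᐟ² + Bⁿ⁺³ᐟ²⟩`. In their sum the mixed terms
`⟨C Eⁿ⁺¹, Bⁿ⁺¹ᐟ²⟩` cancel, leaving `Δt (⟨C Eⁿ, Bⁿ⁺¹ᐟ²⟩ - ⟨C Eⁿ⁺¹, Bⁿ⁺³ᐟ²⟩)`, which is exactly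
the change of the coupling term of the pseudo-energy.
-/

open scoped RealInnerProductSpace

theorem norm_sq_sub_norm_sq_eq_inner {F : Type*} [NormedAddCommGroup F] [InnerProductSpace ℝ F]
    (x y : F) : ‖x‖ ^ 2 - ‖y‖ ^ 2 = ⟪x - y, x + y⟫ := by
  rw [inner_sub_left, inner_add_right, inner_add_right, real_inner_self_eq_norm_sq,
    real_inner_self_eq_norm_sq, real_inner_comm x y]
  ring

section Leapfrog

variable {V W : Type*}
  [NormedAddCommGroup V] [InnerProductSpace ℝ V] [FiniteDimensional ℝ V]
  [NormedAddCommGroup W] [InnerProductSpace ℝ W] [FiniteDimensional ℝ W]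

noncomputable def leapfrogPseudoEnergy (C : V →ₗ[ℝ] W) (Δt : ℝ) (E : V) (B : W) : ℝ :=
  (‖E‖ ^ 2 + ‖B‖ ^ 2) / 2 + Δt / 2 * ⟪C E, B⟫

theorem leapfrogPseudoEnergy_step (C : V →ₗ[ℝ] W) (Δt : ℝ) {E E' : V} {B B' : W}
    (hE : E' = E + Δt • LinearMap.adjoint C B) (hB : B' = B - Δt • C E') :
    leapfrogPseudoEnergy C Δt E' B' = leapfrogPseudoEnergy C Δt E B := by
  have hE_sq : ‖E'‖ ^ 2 - ‖E‖ ^ 2 = Δt * (⟪C E, B⟫ + ⟪C E', B⟫) := by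
    rw [norm_sq_sub_norm_sq_eq_inner, hE, add_sub_cancel_left, real_inner_smul_left,
      ← hE, LinearMap.adjoint_inner_left, map_add, inner_add_right,
      real_inner_comm (C E), real_inner_comm (C E'), add_comm]
  have hB_sq : ‖B'‖ ^ 2 - ‖B‖ ^ 2 = -Δt * (⟪C E', B⟫ + ⟪C E', B'⟫) := by
    rw [norm_sq_sub_norm_sq_eq_inner, hB, sub_sub_cancel_left, ← hB, inner_neg_left,
      real_inner_smul_left, inner_add_right]
    ring
  unfold leapfrogPseudoEnergy
  linear_combination (hE_sq + hB_sq) / 2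

end Leapfrog

theorem stmt13_general
    {V W : Type*}
    [NormedAddCommGroup V] [InnerProductSpace ℝ V] [FiniteDimensional ℝ V]
    [NormedAddCommGroup W] [InnerProductSpace ℝ W] [FiniteDimensional ℝ W]
    (C : V →ₗ[ℝ] W)
    (Δt : ℝ)
    (E : ℕ → V) (B : ℕ → W)
    (hE : ∀ n, E (n + 1) = E n + Δt • LinearMap.adjoint C (B n))
    (hB : ∀ n, B (n + 1) = B n - Δt • C (E (n + 1))) :
    ∀ n : ℕ,
      (‖E (n + 1)‖ ^ 2 + ‖B (n + 1)‖ ^ 2) / 2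
          + Δt / 2 * ⟪C (E (n + 1)), B (n + 1)⟫
        = (‖E n‖ ^ 2 + ‖B n‖ ^ 2) / 2 + Δt / 2 * ⟪C (E n), B n⟫ := by
  intro n
  exact leapfrogPseudoEnergy_step C Δt (hE n) (hB n)

/-- pseudo-energy conservation, Section 3.6: the sourceless
leap-frog iteration `Eⁿ⁺¹ = Eⁿ + Δt C* Bⁿ⁺¹ᐟ²`, `Bⁿ⁺³ᐟ² = Bⁿ⁺¹ᐟ² − Δt C Eⁿ⁺¹`
conserves the discrete pseudo-energy
`H*ₙ = ½(‖Eⁿ‖² + ‖Bⁿ⁺¹ᐟ²‖²) + (Δt/2)⟨C Eⁿ, Bⁿ⁺¹ᐟ²⟩`. -/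
theorem stmt13
    {V W : Type*}
    [NormedAddCommGroup V] [InnerProductSpace ℝ V] [FiniteDimensional ℝ V]
    [NormedAddCommGroup W] [InnerProductSpace ℝ W] [FiniteDimensional ℝ W]
    (C : V →ₗ[ℝ] W)
    (Δt : ℝ) (hΔt : 0 < Δt)
    (E : ℕ → V) (B : ℕ → W)
    (hE : ∀ n, E (n + 1) = E n + Δt • LinearMap.adjoint C (B n))
    (hB : ∀ n, B (n + 1) = B n - Δt • C (E (n + 1))) :
    ∀ n : ℕ,
      (‖E (n + 1)‖ ^ 2 + ‖B (n + 1)‖ ^ 2) / 2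
          + Δt / 2 * ⟪C (E (n + 1)), B (n + 1)⟫
        = (‖E n‖ ^ 2 + ‖B n‖ ^ 2) / 2 + Δt / 2 * ⟪C (E n), B n⟫ :=
  stmt13_general C Δt E B hE hB
end

section
/- Let V, W be finite-dimensional real inner product spaces, C : V → W linear with operator norm ‖C‖, and Δt > 0 with Δt·‖C‖ < 2. Then for any E ∈ V and B ∈ W, the pseudo-energy H* := ½(‖E‖² + ‖B‖²) + (Δt/2)⟨CE, B⟩ satisfies the two-sided bound (1 + Δt‖C‖/2)⁻¹ H* ≤ ½(‖E‖² + ‖B‖²) ≤ (1 − Δt‖C‖/2)⁻¹ H*. -/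
open scoped RealInnerProductSpace

/-!
By Cauchy–Schwarz, the operator-norm bound and AM–GM, the coupling term satisfies
`|(Δt/2)⟪CE, B⟫| ≤ a e` with `a = Δt‖C‖/2` and `e = ½(‖E‖² + ‖B‖²)`, so
`(1 - a) e ≤ H* ≤ (1 + a) e`; the CFL condition is exactly `a < 1`, which makes both factors positive.
-/

theorem abs_real_inner_apply_le_opNorm_mul {V W : Type*}
    [NormedAddCommGroup V] [InnerProductSpace ℝ V]
    [NormedAddCommGroup W] [InnerProductSpace ℝ W]
    (C : V →L[ℝ] W) (E : V) (B : W) :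
    |⟪C E, B⟫| ≤ ‖C‖ * ((‖E‖ ^ 2 + ‖B‖ ^ 2) / 2) :=
  calc |⟪C E, B⟫| ≤ ‖C E‖ * ‖B‖ := abs_real_inner_le_norm _ _
    _ ≤ ‖C‖ * ‖E‖ * ‖B‖ := by gcongr; exact C.le_opNorm E
    _ = ‖C‖ * (‖E‖ * ‖B‖) := mul_assoc _ _ _
    _ ≤ ‖C‖ * ((‖E‖ ^ 2 + ‖B‖ ^ 2) / 2) := by
      gcongr
      linarith [two_mul_le_add_sq ‖E‖ ‖B‖]

theorem inv_one_add_mul_add_le {a e x : ℝ} (ha : 0 ≤ a) (hx : |x| ≤ a * e) :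
    (1 + a)⁻¹ * (e + x) ≤ e := by
  rw [inv_mul_le_iff₀ (by linarith)]
  linarith [le_abs_self x]

theorem le_inv_one_sub_mul_add {a e x : ℝ} (ha : a < 1) (hx : |x| ≤ a * e) :
    e ≤ (1 - a)⁻¹ * (e + x) := by
  rw [le_inv_mul_iff₀ (by linarith)]
  linarith [neg_abs_le x]

theorem stmt14_general
    {V W : Type*}
    [NormedAddCommGroup V] [InnerProductSpace ℝ V]
    [NormedAddCommGroup W] [InnerProductSpace ℝ W]
    (C : V →L[ℝ] W)
    (Δt : ℝ) (hΔt : 0 < Δt) (hCFL : Δt * ‖C‖ < 2)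
    (E : V) (B : W) :
    (1 + Δt * ‖C‖ / 2)⁻¹ * ((‖E‖ ^ 2 + ‖B‖ ^ 2) / 2 + Δt / 2 * ⟪C E, B⟫)
        ≤ (‖E‖ ^ 2 + ‖B‖ ^ 2) / 2 ∧
    (‖E‖ ^ 2 + ‖B‖ ^ 2) / 2
        ≤ (1 - Δt * ‖C‖ / 2)⁻¹ * ((‖E‖ ^ 2 + ‖B‖ ^ 2) / 2 + Δt / 2 * ⟪C E, B⟫) := by
  have hcoupling : |Δt / 2 * ⟪C E, B⟫| ≤ Δt * ‖C‖ / 2 * ((‖E‖ ^ 2 + ‖B‖ ^ 2) / 2) := by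
    rw [abs_mul, abs_of_pos (half_pos hΔt), mul_div_right_comm, mul_assoc]
    gcongr
    exact abs_real_inner_apply_le_opNorm_mul C E B
  exact ⟨inv_one_add_mul_add_le (by positivity) hcoupling,
    le_inv_one_sub_mul_add (by linarith) hcoupling⟩

/-- CFL stability bound, Section 3.6: if `Δt ‖C‖ < 2` then the
pseudo-energy `H* = ½(‖E‖² + ‖B‖²) + (Δt/2)⟨CE, B⟩` controls the energy
from both sides. -/
theorem stmt14
    {V W : Type*}
    [NormedAddCommGroup V] [InnerProductSpace ℝ V] [FiniteDimensional ℝ V]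
    [NormedAddCommGroup W] [InnerProductSpace ℝ W] [FiniteDimensional ℝ W]
    (C : V →L[ℝ] W)
    (Δt : ℝ) (hΔt : 0 < Δt) (hCFL : Δt * ‖C‖ < 2)
    (E : V) (B : W) :
    (1 + Δt * ‖C‖ / 2)⁻¹ * ((‖E‖ ^ 2 + ‖B‖ ^ 2) / 2 + Δt / 2 * ⟪C E, B⟫)
        ≤ (‖E‖ ^ 2 + ‖B‖ ^ 2) / 2 ∧
    (‖E‖ ^ 2 + ‖B‖ ^ 2) / 2
        ≤ (1 - Δt * ‖C‖ / 2)⁻¹ * ((‖E‖ ^ 2 + ‖B‖ ^ 2) / 2 + Δt / 2 * ⟪C E, B⟫) :=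
  stmt14_general C Δt hΔt hCFL E B
end

section
/- Let V⁰, V¹ be finite-dimensional real inner product spaces, grad : V⁰ → V¹ linear, P⁰ : V⁰ → V⁰ and P¹ : V¹ → V¹ linear projections with P¹ ∘ grad ∘ P⁰ = grad ∘ P⁰. Define grad_h := grad ∘ P⁰ and diṽ_h := −(grad_h)* : V¹ → V⁰, and the dual projections T⁰ := (P⁰)* Q⁰, T¹ := (P¹)* Q¹, where Q⁰, Q¹ are orthogonal projections from ambient Hilbert spaces H⁰ ⊇ V⁰, H¹ ⊇ V¹. Suppose Div : D ⊆ H¹ → H⁰ is a linear map satisfying ⟨Div u, P⁰ q⟩ = −⟨u, grad(P⁰ q)⟩ for all u ∈ D and q ∈ V⁰ (integration by parts against conforming test functions). Then T⁰(Div u) = diṽ_h(T¹ u) for all u ∈ D, i.e. the dual projections commute with the dual differential. -/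
open scoped RealInnerProductSpace

theorem inner_adjoint_orthogonalProjectionOnto_left {𝕜 H : Type*} [RCLike 𝕜]
    [NormedAddCommGroup H] [InnerProductSpace 𝕜 H] (V : Submodule 𝕜 H) [FiniteDimensional 𝕜 V]
    (P : V →ₗ[𝕜] V) (x : H) (q : V) :
    inner 𝕜 (LinearMap.adjoint P (V.orthogonalProjectionOnto x)) q = inner 𝕜 x (P q : H) := by
  rw [LinearMap.adjoint_inner_left, Submodule.inner_orthogonalProjectionOnto_eq_of_mem_right]

theorem stmt17_general
    {H0 H1 : Type*}
    [NormedAddCommGroup H0] [InnerProductSpace ℝ H0] [FiniteDimensional ℝ H0]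
    [NormedAddCommGroup H1] [InnerProductSpace ℝ H1] [FiniteDimensional ℝ H1]
    (V0 : Submodule ℝ H0) (V1 : Submodule ℝ H1)
    (grad : V0 →ₗ[ℝ] V1)
    (P0 : V0 →ₗ[ℝ] V0) (P1 : V1 →ₗ[ℝ] V1)
    (hconf : P1 ∘ₗ (grad ∘ₗ P0) = grad ∘ₗ P0)
    (D : Submodule ℝ H1) (Div : D →ₗ[ℝ] H0)
    (hDiv : ∀ (u : D) (q : V0),
      ⟪Div u, ((P0 q : V0) : H0)⟫ = -⟪(u : H1), ((grad (P0 q) : V1) : H1)⟫) :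
    ∀ u : D,
      LinearMap.adjoint P0 (Submodule.orthogonalProjectionOnto V0 (Div u))
        = -(LinearMap.adjoint (grad ∘ₗ P0))
            (LinearMap.adjoint P1 (Submodule.orthogonalProjectionOnto V1 (u : H1))) := by
  intro u
  refine ext_inner_right ℝ fun q => ?_
  have hconf_q : P1 (grad (P0 q)) = grad (P0 q) := LinearMap.congr_fun hconf q
  rw [inner_adjoint_orthogonalProjectionOnto_left, inner_neg_left, LinearMap.adjoint_inner_left,
    LinearMap.comp_apply, inner_adjoint_orthogonalProjectionOnto_left, hconf_q, hDiv]

/-- commutation (2.17) of the dual commuting projections: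
if `Div` satisfies the integration-by-parts relation against conforming test
functions, then the dual projections `T⁰ = (P⁰)* Q⁰`, `T¹ = (P¹)* Q¹` commute
with the dual differential: `T⁰(Div u) = diṽ_h(T¹ u)`. -/
theorem stmt17
    {H0 H1 : Type*}
    [NormedAddCommGroup H0] [InnerProductSpace ℝ H0] [FiniteDimensional ℝ H0]
    [NormedAddCommGroup H1] [InnerProductSpace ℝ H1] [FiniteDimensional ℝ H1]
    (V0 : Submodule ℝ H0) (V1 : Submodule ℝ H1)
    (grad : V0 →ₗ[ℝ] V1)
    (P0 : V0 →ₗ[ℝ] V0) (P1 : V1 →ₗ[ℝ] V1)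
    (hP0 : P0 ∘ₗ P0 = P0) (hP1 : P1 ∘ₗ P1 = P1)
    (hconf : P1 ∘ₗ (grad ∘ₗ P0) = grad ∘ₗ P0)
    (D : Submodule ℝ H1) (Div : D →ₗ[ℝ] H0)
    (hDiv : ∀ (u : D) (q : V0),
      ⟪Div u, ((P0 q : V0) : H0)⟫ = -⟪(u : H1), ((grad (P0 q) : V1) : H1)⟫) :
    ∀ u : D,
      LinearMap.adjoint P0 (Submodule.orthogonalProjectionOnto V0 (Div u))
        = -(LinearMap.adjoint (grad ∘ₗ P0))
            (LinearMap.adjoint P1 (Submodule.orthogonalProjectionOnto V1 (u : H1))) :=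
  stmt17_general V0 V1 grad P0 P1 hconf D Div hDiv
end
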